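/- Define f₀ : (0,1) → ℝ by f₀(q) = q^{−1}·Σ_{n=0}^{∞} (−1)^n·q^{n(n+1)/2}. Then f₀ is twice differentiable on (0,1), and as q tends to 1 from the left: f₀(q) tends to 1/2, the derivative f₀′(q) tends to −5/8, and (1/2)·f₀″(q) tends to 23/32. -/

import Mathlib

/-!
Write `Sₖ(q) = ∑ (-1)ⁿ Tₙᵏ q^Tₙ` with `Tₙ = n(n+1)/2`. Then `f₀ = q⁻¹ S₀` and `q Sₖ' = Sₖ₊₁`,
so everything reduces to `S₀ → 1/2`, `S₁ → -1/8`, `S₂ → 1/16` as `q → 1⁻`.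

Euler's transformation writes `∑ (-1)ⁿ bₙ` as `∑_{i<j} (-1)ⁱ Δⁱb₀ / 2ⁱ⁺¹` plus `(-1)ʲ 2⁻ʲ` times
the alternating sum of `Δʲb`. For `bₙ = Tₙᵏ q^Tₙ` the leading terms are continuous in `q`, with
value at `q = 1` computed from `Tₙᵏ` alone. For `j = 2k + 2` the remainder is `O(s)`, where
`q = e^{-s²}`: `b` is the restriction to `ℕ` of the entire function `wᵏ e^{-s²w}`,
`w = (z² + z)/2`, so `Δʲbₙ` is a `j`-th derivative at a point of `[n, n + j]`, and Cauchy's estimate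
on the circle of radius `1/s` bounds it by a constant times `s^{j-2k} e^{-sn}`.
-/

open Filter Topology

/-- The function `f₀(q) = q⁻¹ ∑_{n=0}^{∞} (-1)ⁿ q^{n(n+1)/2}` (for `0 < q < 1` the series
converges absolutely; this formula defines `f₀` on all of `ℝ`, with junk values where
the series does not converge). -/
noncomputable def f₀ (q : ℝ) : ℝ := q⁻¹ * ∑' n : ℕ, (-1 : ℝ) ^ n * q ^ (n * (n + 1) / 2)

open Finset
open scoped fwdDiff Nat

lemma Summable.fwdDiff_iter {b : ℕ → ℝ} (hb : Summable b) (j : ℕ) :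
    Summable ((Δ_[1])^[j] b) := by
  induction j generalizing b with
  | zero => exact hb
  | succ j ih => exact ih (((summable_nat_add_iff 1).mpr hb).sub hb)

theorem tsum_alternating_eq_sub_fwdDiff {b : ℕ → ℝ} (hb : Summable b) :
    ∑' n, (-1) ^ n * b n = b 0 / 2 - (∑' n, (-1) ^ n * Δ_[1] b n) / 2 := by
  have hshift := ((summable_nat_add_iff 1).mpr hb).alternating
  have h0 : ∑' n, (-1) ^ n * b n = b 0 - ∑' n, (-1) ^ n * b (n + 1) := by
    rw [hb.alternating.tsum_eq_zero_add, sub_eq_add_neg, ← tsum_neg]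
    simp [pow_succ]
  have h1 : ∑' n, (-1) ^ n * Δ_[1] b n = ∑' n, (-1) ^ n * b (n + 1) - ∑' n, (-1) ^ n * b n := by
    rw [← hshift.tsum_sub hb.alternating]
    simp [fwdDiff, mul_sub]
  linarith

theorem tsum_alternating_eq_euler {b : ℕ → ℝ} (hb : Summable b) (j : ℕ) :
    ∑' n, (-1) ^ n * b n =
      ∑ i ∈ range j, (-1) ^ i / 2 ^ (i + 1) * (Δ_[1])^[i] b 0 +
        (-1) ^ j / 2 ^ j * ∑' n, (-1) ^ n * (Δ_[1])^[j] b n := by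
  induction j with
  | zero => simp
  | succ j ih =>
    rw [ih, tsum_alternating_eq_sub_fwdDiff (hb.fwdDiff_iter j), sum_range_succ,
      ← Function.iterate_succ_apply' (Δ_[1])]
    ring

lemma continuous_fwdDiff_iter_apply {b : ℝ → ℕ → ℝ} (hb : ∀ n, Continuous fun q => b q n)
    (i n : ℕ) : Continuous fun q => (Δ_[1])^[i] (b q) n := by
  simp only [fwdDiff_iter_eq_sum_shift]
  fun_prop

lemma fwdDiff_iter_natCast (f : ℝ → ℝ) (j n : ℕ) :
    (Δ_[1])^[j] (fun m : ℕ => f m) n = (Δ_[1])^[j] f n := by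
  simp [fwdDiff_iter_eq_sum_shift]

theorem exists_fwdDiff_iter_eq_of_hasDerivAt {Φ : ℕ → ℝ → ℝ}
    (hΦ : ∀ i x, HasDerivAt (Φ i) (Φ (i + 1) x) x) (j : ℕ) (x : ℝ) :
    ∃ ξ ∈ Set.Icc x (x + j), (Δ_[1])^[j] (Φ 0) x = Φ j ξ := by
  induction j generalizing Φ x with
  | zero => exact ⟨x, by simp, rfl⟩
  | succ j ih =>
    obtain ⟨ξ, hξ, hΔ⟩ := ih (Φ := fun i y => Φ i (y + 1) - Φ i y)
      (fun i y => ((hΦ i (y + 1)).comp_add_const y 1).sub (hΦ i y)) x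
    obtain ⟨η, hη, hslope⟩ := exists_hasDerivAt_eq_slope (Φ j) (Φ (j + 1)) (lt_add_one ξ)
      (fun y _ => (hΦ j y).continuousAt.continuousWithinAt) (fun y _ => hΦ j y)
    refine ⟨η, ⟨by linarith [hξ.1, hη.1], by push_cast; linarith [hξ.2, hη.2]⟩, ?_⟩
    rw [Function.iterate_succ_apply, hslope, add_sub_cancel_left, div_one]
    exact hΔ

theorem abs_fwdDiff_iter_re_le {F : ℂ → ℂ} (hF : Differentiable ℂ F) {R : ℝ} (hR : 0 < R)
    {M : ℝ → ℝ} (hM : Antitone M)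
    (hFM : ∀ ξ : ℝ, 0 ≤ ξ → ∀ z ∈ Metric.sphere (ξ : ℂ) R, ‖F z‖ ≤ M ξ)
    (j : ℕ) {x : ℝ} (hx : 0 ≤ x) :
    |(Δ_[1])^[j] (fun y : ℝ => (F y).re) x| ≤ j ! * M x / R ^ j := by
  have hΦ (i : ℕ) (y : ℝ) : HasDerivAt (fun y : ℝ => (iteratedDeriv i F y).re)
      (iteratedDeriv (i + 1) F y).re y := by
    rw [iteratedDeriv_succ]
    exact ((hF.contDiff (n := ⊤)).differentiable_iteratedDeriv i
      (WithTop.coe_lt_top _) y).hasDerivAt.real_of_complex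
  obtain ⟨ξ, hξ, hΔ⟩ := exists_fwdDiff_iter_eq_of_hasDerivAt hΦ j x
  simp only [iteratedDeriv_zero] at hΔ
  rw [hΔ]
  calc |(iteratedDeriv j F ξ).re| ≤ ‖iteratedDeriv j F ξ‖ := Complex.abs_re_le_norm _
    _ ≤ j ! * M ξ / R ^ j := Complex.norm_iteratedDeriv_le_of_forall_mem_sphere_norm_le j hR
        hF.diffContOnCl (hFM ξ (hx.trans hξ.1))
    _ ≤ j ! * M x / R ^ j := by gcongr; exact hM hξ.1

lemma tsum_exp_neg_pow_le {s : ℝ} (hs0 : 0 < s) (hs1 : s ≤ 1) :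
    ∑' n : ℕ, Real.exp (-s) ^ n ≤ 2 / s := by
  have hexp : Real.exp (-s) ≤ 1 - s / 2 := by
    have h1 : Real.exp (-s) * Real.exp s = 1 := by rw [← Real.exp_add]; simp
    nlinarith [Real.add_one_le_exp s, Real.exp_pos (-s)]
  rw [tsum_geometric_of_lt_one (Real.exp_pos _).le (Real.exp_lt_one_iff.mpr (by linarith)),
    ← inv_div]
  exact inv_anti₀ (by positivity) (by linarith)

def triangle (n : ℕ) : ℕ := n * (n + 1) / 2

lemma triangle_cast (n : ℕ) : (triangle n : ℝ) = ((n : ℝ) ^ 2 + n) / 2 := by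
  rw [triangle, Nat.cast_div_charZero (even_iff_two_dvd.mp (Nat.even_mul_succ_self n))]
  push_cast; ring

lemma triangle_strictMono : StrictMono triangle :=
  strictMono_nat_of_lt_succ fun n =>
    Nat.div_lt_div_of_lt_of_dvd (Nat.even_mul_succ_self (n + 1)).two_dvd (by nlinarith)

noncomputable def triSeq (k : ℕ) (q : ℝ) (n : ℕ) : ℝ := (triangle n : ℝ) ^ k * q ^ triangle n

noncomputable def altTriangleSeries (k : ℕ) (q : ℝ) : ℝ := ∑' n : ℕ, (-1) ^ n * triSeq k q n

lemma summable_triSeq (k : ℕ) {q : ℝ} (hq0 : 0 ≤ q) (hq1 : q < 1) : Summable (triSeq k q) :=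
  (summable_pow_mul_geometric_of_norm_lt_one (R := ℝ) k
    (by rwa [Real.norm_of_nonneg hq0])).comp_injective triangle_strictMono.injective

lemma natCast_mul_pow_sub_one (m : ℕ) {y : ℝ} (hy : y ≠ 0) :
    (m : ℝ) * y ^ (m - 1) = y⁻¹ * (m * y ^ m) := by
  rcases m with _ | m
  · simp
  · field_simp; simp [pow_succ]

theorem hasDerivAt_altTriangleSeries (k : ℕ) {q : ℝ} (hq0 : 0 < q) (hq1 : q < 1) :
    HasDerivAt (altTriangleSeries k) (q⁻¹ * altTriangleSeries (k + 1) q) q := by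
  obtain ⟨r, hqr, hr1⟩ := exists_between hq1
  have hr0 : 0 < r := hq0.trans hqr
  have hq : q ∈ Set.Ioo 0 r := ⟨hq0, hqr⟩
  have key := hasDerivAt_tsum_of_isPreconnected (t := Set.Ioo 0 r) (y₀ := q)
    (g := fun n y => (-1) ^ n * triSeq k y n)
    (g' := fun n y => (-1) ^ n * (triangle n : ℝ) ^ k * ((triangle n : ℝ) * y ^ (triangle n - 1)))
    (((summable_triSeq (k + 1) hr0.le hr1).mul_left r⁻¹)) isOpen_Ioo isPreconnected_Ioo
    (fun n y _ => by
      simpa only [triSeq, mul_assoc] using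
        (hasDerivAt_pow (triangle n) y).const_mul ((-1) ^ n * (triangle n : ℝ) ^ k))
    (fun n y hy => by
      have hyr : y ^ (triangle n - 1) ≤ r ^ (triangle n - 1) :=
        pow_le_pow_left₀ hy.1.le hy.2.le _
      calc ‖(-1) ^ n * (triangle n : ℝ) ^ k * ((triangle n : ℝ) * y ^ (triangle n - 1))‖
          = (triangle n : ℝ) ^ k * ((triangle n : ℝ) * y ^ (triangle n - 1)) := by
            simp [abs_of_pos hy.1]
        _ ≤ (triangle n : ℝ) ^ k * ((triangle n : ℝ) * r ^ (triangle n - 1)) := by gcongr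
        _ = r⁻¹ * triSeq (k + 1) r n := by
            rw [natCast_mul_pow_sub_one _ hr0.ne', triSeq]; ring)
    hq (summable_triSeq k hq0.le hq1).alternating hq
  refine (key : HasDerivAt (altTriangleSeries k) _ q).congr_deriv ?_
  rw [altTriangleSeries, ← tsum_mul_left]
  refine tsum_congr fun n : ℕ => ?_
  rw [triSeq, natCast_mul_pow_sub_one _ hq0.ne']
  ring

lemma norm_sq_add_self_le {z : ℂ} {ξ s : ℝ} (hs0 : 0 < s) (hs1 : s ≤ 1) (hξ : 0 ≤ ξ)
    (hz : z ∈ Metric.sphere (ξ : ℂ) s⁻¹) : ‖(z ^ 2 + z) / 2‖ ≤ ((s * ξ + 2) / s) ^ 2 := by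
  have hzn : ‖z‖ ≤ ξ + s⁻¹ := by
    simpa [mem_sphere_iff_norm.mp hz, abs_of_nonneg hξ] using norm_le_norm_add_norm_sub' z (ξ : ℂ)
  have h1 : 1 ≤ s⁻¹ := one_le_inv₀ hs0 |>.mpr hs1
  have h2 : (s * ξ + 2) / s = ξ + 2 * s⁻¹ := by field_simp
  rw [h2, norm_div, Complex.norm_two]
  calc ‖z ^ 2 + z‖ / 2 ≤ ‖z ^ 2 + z‖ := by linarith [norm_nonneg (z ^ 2 + z)]
    _ ≤ ‖z‖ ^ 2 + ‖z‖ := (norm_add_le _ _).trans_eq (by rw [norm_pow])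
    _ ≤ (ξ + 2 * s⁻¹) ^ 2 := by nlinarith [norm_nonneg z]

lemma re_sq_add_self_ge {z : ℂ} {ξ s : ℝ} (hs0 : 0 < s) (hs1 : s ≤ 1) (hξ : 0 ≤ ξ)
    (hz : z ∈ Metric.sphere (ξ : ℂ) s⁻¹) :
    ((s * ξ) ^ 2 - 2 * (s * ξ) - 2) / 2 ≤ s ^ 2 * ((z ^ 2 + z) / 2).re := by
  have hnorm : (s * (z.re - ξ)) ^ 2 + (s * z.im) ^ 2 = 1 := by
    have h := congrArg (· ^ 2) (mem_sphere_iff_norm.mp hz)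
    simp only [Complex.sq_norm, Complex.normSq_apply, Complex.sub_re, Complex.sub_im,
      Complex.ofReal_re, Complex.ofReal_im, sub_zero] at h
    field_simp at h
    linear_combination h
  have hx : -1 ≤ s * (z.re - ξ) := by nlinarith [sq_nonneg (s * z.im)]
  have hre : ((z ^ 2 + z) / 2).re = (z.re ^ 2 - z.im ^ 2 + z.re) / 2 := by simp [sq]
  rw [hre]
  nlinarith [mul_nonneg hs0.le hξ]

noncomputable def triGauss (k : ℕ) (s : ℝ) (z : ℂ) : ℂ :=
  ((z ^ 2 + z) / 2) ^ k * Complex.exp ((-s ^ 2 : ℝ) * ((z ^ 2 + z) / 2))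

lemma differentiable_triGauss (k : ℕ) (s : ℝ) : Differentiable ℂ (triGauss k s) := by
  unfold triGauss; fun_prop

lemma triGauss_natCast_re (k : ℕ) (s : ℝ) (n : ℕ) :
    (triGauss k s ((n : ℝ) : ℂ)).re = triSeq k (Real.exp (-s ^ 2)) n := by
  have hT : (((n : ℝ) : ℂ) ^ 2 + (n : ℝ)) / 2 = ((triangle n : ℝ) : ℂ) := by
    rw [triangle_cast]; push_cast; ring
  rw [triGauss, hT, triSeq, ← Real.exp_nat_mul, ← Complex.ofReal_mul, ← Complex.ofReal_exp,
    ← Complex.ofReal_pow, ← Complex.ofReal_mul, Complex.ofReal_re, mul_comm (triangle n : ℝ)]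

lemma norm_triGauss_le (k : ℕ) {s ξ : ℝ} (hs0 : 0 < s) (hs1 : s ≤ 1) (hξ : 0 ≤ ξ) {z : ℂ}
    (hz : z ∈ Metric.sphere (ξ : ℂ) s⁻¹) :
    ‖triGauss k s z‖ ≤ (2 * k)! * Real.exp 8 / s ^ (2 * k) * Real.exp (-(s * ξ)) := by
  set y := s * ξ
  have hy : 0 ≤ y := mul_nonneg hs0.le hξ
  have hpoly : ‖(z ^ 2 + z) / 2‖ ^ k ≤ (2 * k)! * Real.exp (y + 2) / s ^ (2 * k) := by
    calc ‖(z ^ 2 + z) / 2‖ ^ k ≤ (((y + 2) / s) ^ 2) ^ k := by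
          gcongr; exact norm_sq_add_self_le hs0 hs1 hξ hz
      _ = (y + 2) ^ (2 * k) / s ^ (2 * k) := by rw [← pow_mul, div_pow]
      _ ≤ (2 * k)! * Real.exp (y + 2) / s ^ (2 * k) := by
          gcongr
          have := Real.pow_div_factorial_le_exp (y + 2) (by linarith) (2 * k)
          rw [div_le_iff₀ (by positivity)] at this
          linarith
  have hgauss : Real.exp (-s ^ 2 * ((z ^ 2 + z) / 2).re) ≤ Real.exp (1 + y - y ^ 2 / 2) := by
    gcongr; linarith [re_sq_add_self_ge hs0 hs1 hξ hz]
  rw [triGauss, norm_mul, norm_pow, Complex.norm_exp, Complex.re_ofReal_mul]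
  calc ‖(z ^ 2 + z) / 2‖ ^ k * Real.exp (-s ^ 2 * ((z ^ 2 + z) / 2).re)
      ≤ (2 * k)! * Real.exp (y + 2) / s ^ (2 * k) * Real.exp (1 + y - y ^ 2 / 2) := by
        gcongr
    _ = (2 * k)! / s ^ (2 * k) * Real.exp (3 + 2 * y - y ^ 2 / 2) := by
        rw [show 3 + 2 * y - y ^ 2 / 2 = (y + 2) + (1 + y - y ^ 2 / 2) by ring,
          Real.exp_add (y + 2)]
        ring
    _ ≤ (2 * k)! / s ^ (2 * k) * Real.exp (8 - y) := by
        gcongr _ * Real.exp ?_; nlinarith [sq_nonneg (y - 3)]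
    _ = _ := by rw [sub_eq_add_neg, Real.exp_add]; ring

lemma abs_fwdDiff_iter_triSeq_le (k j : ℕ) {s : ℝ} (hs0 : 0 < s) (hs1 : s ≤ 1) (n : ℕ) :
    |(Δ_[1])^[j] (triSeq k (Real.exp (-s ^ 2))) n| ≤
      j ! * (2 * k)! * Real.exp 8 * s ^ j / s ^ (2 * k) * Real.exp (-s) ^ n := by
  have hb : triSeq k (Real.exp (-s ^ 2)) = fun m : ℕ => (triGauss k s ((m : ℝ) : ℂ)).re := by
    funext m; exact (triGauss_natCast_re k s m).symm
  have hM : Antitone fun ξ : ℝ => (2 * k)! * Real.exp 8 / s ^ (2 * k) * Real.exp (-(s * ξ)) :=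
    fun a b hab => by dsimp only; gcongr
  rw [hb, fwdDiff_iter_natCast (fun y : ℝ => (triGauss k s y).re)]
  refine (abs_fwdDiff_iter_re_le (differentiable_triGauss k s) (inv_pos.mpr hs0) hM
    (fun ξ hξ z hz => norm_triGauss_le k hs0 hs1 hξ hz) j n.cast_nonneg).trans_eq ?_
  rw [← Real.exp_nat_mul, inv_pow, div_inv_eq_mul]
  ring_nf

theorem abs_tsum_alternating_fwdDiff_triSeq_le (k : ℕ) {s : ℝ} (hs0 : 0 < s) (hs1 : s ≤ 1) :
    |∑' n, (-1) ^ n * (Δ_[1])^[2 * k + 2] (triSeq k (Real.exp (-s ^ 2))) n| ≤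
      2 * (2 * k + 2)! * (2 * k)! * Real.exp 8 * s := by
  set C := ((2 * k + 2)! * (2 * k)! * Real.exp 8 : ℝ)
  have hD := (summable_triSeq k (q := Real.exp (-s ^ 2)) (Real.exp_pos _).le
    (Real.exp_lt_one_iff.mpr (neg_lt_zero.mpr (by positivity)))).fwdDiff_iter (2 * k + 2)
  have hbound (n : ℕ) : |(Δ_[1])^[2 * k + 2] (triSeq k (Real.exp (-s ^ 2))) n| ≤
      C * s ^ 2 * Real.exp (-s) ^ n := by
    refine (abs_fwdDiff_iter_triSeq_le k (2 * k + 2) hs0 hs1 n).trans_eq ?_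
    rw [pow_add s (2 * k), mul_div_assoc, mul_div_cancel_left₀ _ (by positivity)]
  have hgeom : Summable fun n : ℕ => Real.exp (-s) ^ n :=
    summable_geometric_of_lt_one (Real.exp_pos _).le (Real.exp_lt_one_iff.mpr (by linarith))
  calc |∑' n, (-1) ^ n * (Δ_[1])^[2 * k + 2] (triSeq k (Real.exp (-s ^ 2))) n|
      ≤ ∑' n, |(Δ_[1])^[2 * k + 2] (triSeq k (Real.exp (-s ^ 2))) n| := by
        simpa using norm_tsum_le_tsum_norm hD.alternating.norm
    _ ≤ ∑' n : ℕ, C * s ^ 2 * Real.exp (-s) ^ n :=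
        hD.abs.tsum_le_tsum hbound (hgeom.mul_left _)
    _ ≤ C * s ^ 2 * (2 / s) := by
        rw [tsum_mul_left]; gcongr; exact tsum_exp_neg_pow_le hs0 hs1
    _ = 2 * (2 * k + 2)! * (2 * k)! * Real.exp 8 * s := by field_simp; ring

lemma tendsto_sqrt_neg_log_nhdsLT_one :
    Tendsto (fun q => √(-Real.log q)) (𝓝[<] 1) (𝓝 0) := by
  simpa using ((Real.continuousAt_log one_ne_zero).neg.sqrt).tendsto.mono_left nhdsWithin_le_nhds

theorem tendsto_tsum_alternating_fwdDiff_triSeq (k : ℕ) :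
    Tendsto (fun q => ∑' n, (-1) ^ n * (Δ_[1])^[2 * k + 2] (triSeq k q) n) (𝓝[<] 1) (𝓝 0) := by
  have hlim := tendsto_sqrt_neg_log_nhdsLT_one.const_mul (2 * (2 * k + 2)! * (2 * k)! * Real.exp 8)
  rw [mul_zero] at hlim
  refine squeeze_zero_norm' ?_ hlim
  filter_upwards [Ioo_mem_nhdsLT (Real.exp_lt_one_iff.mpr neg_one_lt_zero)] with q hq
  have hq0 : 0 < q := (Real.exp_pos _).trans hq.1
  have hlog : 0 < -Real.log q := neg_pos.mpr (Real.log_neg hq0 hq.2)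
  have hs1 : √(-Real.log q) ≤ 1 := Real.sqrt_le_one.mpr (by
    linarith [Real.log_lt_log (Real.exp_pos _) hq.1, Real.log_exp (-1)])
  have hq : Real.exp (-√(-Real.log q) ^ 2) = q := by
    rw [Real.sq_sqrt hlog.le, neg_neg, Real.exp_log hq0]
  simpa only [hq, Real.norm_eq_abs] using
    abs_tsum_alternating_fwdDiff_triSeq_le k (Real.sqrt_pos.mpr hlog) hs1

theorem tendsto_altTriangleSeries (k : ℕ) :
    Tendsto (altTriangleSeries k) (𝓝[<] 1) (𝓝 (∑ i ∈ range (2 * k + 2),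
      (-1) ^ i / 2 ^ (i + 1) * (Δ_[1])^[i] (fun n => (triangle n : ℝ) ^ k) 0)) := by
  have hmain : Continuous fun q => ∑ i ∈ range (2 * k + 2),
      (-1) ^ i / 2 ^ (i + 1) * (Δ_[1])^[i] (triSeq k q) 0 :=
    continuous_finsetSum _ fun i _ => continuous_const.mul
      (continuous_fwdDiff_iter_apply (fun n => by unfold triSeq; fun_prop) i 0)
  have h := (hmain.tendsto 1).mono_left nhdsWithin_le_nhds |>.add
    ((tendsto_tsum_alternating_fwdDiff_triSeq k).const_mul ((-1) ^ (2 * k + 2) / 2 ^ (2 * k + 2)))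
  have h1 : triSeq k 1 = fun n => (triangle n : ℝ) ^ k := by
    funext n; rw [triSeq, one_pow, mul_one]
  rw [mul_zero, add_zero, h1] at h
  refine h.congr' ?_
  filter_upwards [Ioo_mem_nhdsLT zero_lt_one] with q hq
  exact (tsum_alternating_eq_euler (summable_triSeq k hq.1.le hq.2) _).symm

lemma tendsto_altTriangleSeries_zero : Tendsto (altTriangleSeries 0) (𝓝[<] 1) (𝓝 (1 / 2)) := by
  convert tendsto_altTriangleSeries 0 using 2
  norm_num [fwdDiff_iter_eq_sum_shift, sum_range_succ]

lemma tendsto_altTriangleSeries_one : Tendsto (altTriangleSeries 1) (𝓝[<] 1) (𝓝 (-1 / 8)) := by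
  convert tendsto_altTriangleSeries 1 using 2
  norm_num [fwdDiff_iter_eq_sum_shift, sum_range_succ, triangle, Nat.choose]

lemma tendsto_altTriangleSeries_two : Tendsto (altTriangleSeries 2) (𝓝[<] 1) (𝓝 (1 / 16)) := by
  convert tendsto_altTriangleSeries 2 using 2
  norm_num [fwdDiff_iter_eq_sum_shift, sum_range_succ, triangle, Nat.choose]

lemma f₀_eq : f₀ = fun q => q⁻¹ * altTriangleSeries 0 q := by
  funext q
  simp [f₀, altTriangleSeries, triSeq, triangle]

lemma hasDerivAt_f₀ {q : ℝ} (hq0 : 0 < q) (hq1 : q < 1) :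
    HasDerivAt f₀ (q⁻¹ ^ 2 * (altTriangleSeries 1 q - altTriangleSeries 0 q)) q := by
  rw [f₀_eq]
  refine ((hasDerivAt_inv hq0.ne').mul (hasDerivAt_altTriangleSeries 0 hq0 hq1)).congr_deriv ?_
  field_simp
  ring

lemma hasDerivAt_deriv_f₀ {q : ℝ} (hq0 : 0 < q) (hq1 : q < 1) :
    HasDerivAt (deriv f₀) (q⁻¹ ^ 3 *
      (altTriangleSeries 2 q - 3 * altTriangleSeries 1 q + 2 * altTriangleSeries 0 q)) q := by
  have heq : deriv f₀ =ᶠ[𝓝 q]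
      fun x => x⁻¹ ^ 2 * (altTriangleSeries 1 x - altTriangleSeries 0 x) := by
    filter_upwards [Ioo_mem_nhds hq0 hq1] with x hx using (hasDerivAt_f₀ hx.1 hx.2).deriv
  refine HasDerivAt.congr_of_eventuallyEq ?_ heq
  refine (((hasDerivAt_inv hq0.ne').pow 2).mul ((hasDerivAt_altTriangleSeries 1 hq0 hq1).sub
    (hasDerivAt_altTriangleSeries 0 hq0 hq1))).congr_deriv ?_
  simp only [Pi.pow_apply, Pi.sub_apply, Nat.add_one_sub_one, pow_one]
  field_simp
  ring

theorem f0_limits_at_one :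
    (∀ q ∈ Set.Ioo (0 : ℝ) 1, DifferentiableAt ℝ f₀ q ∧ DifferentiableAt ℝ (deriv f₀) q) ∧
    Tendsto f₀ (𝓝[<] (1 : ℝ)) (𝓝 (1 / 2)) ∧
    Tendsto (deriv f₀) (𝓝[<] (1 : ℝ)) (𝓝 (-5 / 8)) ∧
    Tendsto (fun q => (1 / 2) * deriv (deriv f₀) q) (𝓝[<] (1 : ℝ)) (𝓝 (23 / 32)) := by
  have hinv : Tendsto (fun q : ℝ => q⁻¹) (𝓝[<] 1) (𝓝 1) := by
    simpa using (tendsto_inv₀ (one_ne_zero' ℝ)).mono_left nhdsWithin_le_nhds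
  have hS0 := tendsto_altTriangleSeries_zero
  have hS1 := tendsto_altTriangleSeries_one
  have hS2 := tendsto_altTriangleSeries_two
  have hIoo : ∀ᶠ q in 𝓝[<] (1 : ℝ), q ∈ Set.Ioo 0 1 := Ioo_mem_nhdsLT zero_lt_one
  refine ⟨fun q hq => ⟨(hasDerivAt_f₀ hq.1 hq.2).differentiableAt,
    (hasDerivAt_deriv_f₀ hq.1 hq.2).differentiableAt⟩, ?_, ?_, ?_⟩
  · rw [f₀_eq]
    simpa using hinv.mul hS0
  · convert ((hinv.pow 2).mul (hS1.sub hS0)).congr'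
      (hIoo.mono fun q hq => (hasDerivAt_f₀ hq.1 hq.2).deriv.symm) using 2
    norm_num
  · convert (((hinv.pow 3).mul ((hS2.sub (hS1.const_mul 3)).add (hS0.const_mul 2))).const_mul
      (1 / 2 : ℝ)).congr' (hIoo.mono fun q hq =>
        congrArg (1 / 2 * ·) (hasDerivAt_deriv_f₀ hq.1 hq.2).deriv.symm) using 2
    norm_num
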